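/- arXiv:2310.00998 — 2 statements merged into one kernel-verified Lean document; each statement's English description precedes it below -/
import Mathlib

section
/- Strong forward bisimilarity and strong reverse bisimilarity are incomparable: a†.0 ~FB 0 but not a†.0 ~RB 0, and a.0 ~RB 0 but not a.0 ~FB 0. -/
inductive Proc (A : Type) : Type
  | nil : Proc A
  | pre : A → Proc A → Proc A
  | exe : A → Proc A → Proc A
  | choice : Proc A → Proc A → Proc A

inductive Initial {A : Type} : Proc A → Prop
  | nil : Initial .nil
  | pre {a : A} {P : Proc A} : Initial P → Initial (.pre a P)
  | choice {P Q : Proc A} : Initial P → Initial Q → Initial (.choice P Q)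

inductive Final {A : Type} : Proc A → Prop
  | nil : Final .nil
  | exe {a : A} {P : Proc A} : Final P → Final (.exe a P)
  | choiceL {P Q : Proc A} : Final P → Initial Q → Final (.choice P Q)
  | choiceR {P Q : Proc A} : Initial P → Final Q → Final (.choice P Q)

inductive Reachable {A : Type} : Proc A → Prop
  | nil : Reachable .nil
  | pre {a : A} {P : Proc A} : Initial P → Reachable (.pre a P)
  | exe {a : A} {P : Proc A} : Reachable P → Reachable (.exe a P)
  | choiceL {P Q : Proc A} : Reachable P → Initial Q → Reachable (.choice P Q)
  | choiceR {P Q : Proc A} : Initial P → Reachable Q → Reachable (.choice P Q)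

inductive Tr {A : Type} : Proc A → A → Proc A → Prop
  | actf {a : A} {P : Proc A} : Initial P → Tr (.pre a P) a (.exe a P)
  | actp {a b : A} {P P' : Proc A} : Tr P b P' → Tr (.exe a P) b (.exe a P')
  | chol {a : A} {P1 P1' P2 : Proc A} : Tr P1 a P1' → Initial P2 →
      Tr (.choice P1 P2) a (.choice P1' P2)
  | chor {a : A} {P1 P2 P2' : Proc A} : Tr P2 a P2' → Initial P1 →
      Tr (.choice P1 P2) a (.choice P1 P2')

def IsFwdBisim {A : Type} (B : Proc A → Proc A → Prop) : Prop :=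
  (∀ P Q, B P Q → B Q P) ∧
  (∀ P Q a P', B P Q → Tr P a P' → ∃ Q', Tr Q a Q' ∧ B P' Q')

def IsRevBisim {A : Type} (B : Proc A → Proc A → Prop) : Prop :=
  (∀ P Q, B P Q → B Q P) ∧
  (∀ P Q a P', B P Q → Tr P' a P → ∃ Q', Tr Q' a Q ∧ B P' Q')

def IsFRBisim {A : Type} (B : Proc A → Proc A → Prop) : Prop :=
  (∀ P Q, B P Q → B Q P) ∧
  (∀ P Q a P', B P Q → Tr P a P' → ∃ Q', Tr Q a Q' ∧ B P' Q') ∧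
  (∀ P Q a P', B P Q → Tr P' a P → ∃ Q', Tr Q' a Q ∧ B P' Q')

def FB {A : Type} (P Q : Proc A) : Prop := ∃ B, IsFwdBisim B ∧ B P Q

def RB {A : Type} (P Q : Proc A) : Prop := ∃ B, IsRevBisim B ∧ B P Q

def FRB {A : Type} (P Q : Proc A) : Prop := ∃ B, IsFRBisim B ∧ B P Q

def FBps {A : Type} (P Q : Proc A) : Prop :=
  ∃ B, IsFwdBisim B ∧ (∀ P' Q', B P' Q' → (Initial P' ↔ Initial Q')) ∧ B P Q

lemma no_tr_nil {A : Type} {b : A} {P' : Proc A} : ¬ Tr (Proc.nil : Proc A) b P' := by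
  intro h; cases h

lemma no_tr_exe_nil {A : Type} {c b : A} {P' : Proc A} :
    ¬ Tr (Proc.exe c Proc.nil) b P' := by
  intro h; cases h with
  | actp h' => exact no_tr_nil h'

lemma no_tr_into_nil {A : Type} {b : A} {P' : Proc A} : ¬ Tr P' b (Proc.nil : Proc A) := by
  intro h; cases h

lemma no_tr_into_pre {A : Type} {c b : A} {P P' : Proc A} :
    ¬ Tr P' b (Proc.pre c P) := by
  intro h; cases h

theorem fb_rb_incomparable {A : Type} (a : A) :
    FB (Proc.exe a Proc.nil) Proc.nil ∧ ¬ RB (Proc.exe a Proc.nil) Proc.nil ∧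
    RB (Proc.pre a Proc.nil) Proc.nil ∧ ¬ FB (Proc.pre a Proc.nil) Proc.nil := by
  constructor
  · refine ⟨fun P Q => (P = Proc.exe a Proc.nil ∧ Q = Proc.nil) ∨ (Q = Proc.exe a Proc.nil ∧ P = Proc.nil), ⟨?_, ?_⟩, Or.inl ⟨rfl, rfl⟩⟩
    · rintro P Q (h | h); exact Or.inr h; exact Or.inl h
    · rintro P Q b P' (⟨rfl, rfl⟩ | ⟨rfl, rfl⟩) h
      · exact absurd h no_tr_exe_nil
      · exact absurd h no_tr_nil
  refine ⟨?_, ?_, ?_⟩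
  · rintro ⟨B, ⟨hsym, hrev⟩, hB⟩
    obtain ⟨Q', hQ', -⟩ := hrev _ _ a (Proc.pre a Proc.nil) hB (Tr.actf Initial.nil)
    exact no_tr_into_nil hQ'
  · refine ⟨fun P Q => (P = Proc.pre a Proc.nil ∧ Q = Proc.nil) ∨ (Q = Proc.pre a Proc.nil ∧ P = Proc.nil), ⟨?_, ?_⟩, Or.inl ⟨rfl, rfl⟩⟩
    · rintro P Q (h | h); exact Or.inr h; exact Or.inl h
    · rintro P Q b P' (⟨rfl, rfl⟩ | ⟨rfl, rfl⟩) h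
      · exact absurd h no_tr_into_pre
      · exact absurd h no_tr_into_nil
  · rintro ⟨B, ⟨hsym, hfwd⟩, hB⟩
    obtain ⟨Q', hQ', -⟩ := hfwd _ _ a (Proc.exe a Proc.nil) hB (Tr.actf Initial.nil)
    exact no_tr_nil hQ'
end

section
/- Over initial processes, strong forward-reverse bisimilarity coincides with strong forward bisimilarity: if P1 and P2 are initial, then P1 ~FRB P2 iff P1 ~FB P2. -/
-- Auxiliary lemmas

theorem tr_not_initial {A : Type} {P P' : Proc A} {a : A}
    (h : Tr P a P') : ¬ Initial P' := by
  induction h with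
  | actf _ => intro h; cases h
  | actp _ ih => intro h; cases h
  | chol _ _ ih => intro h; cases h; exact ih ‹_›
  | chor _ _ ih => intro h; cases h; exact ih ‹_›

theorem initial_reachable {A : Type} {P : Proc A} (h : Initial P) : Reachable P := by
  induction h with
  | nil => exact .nil
  | pre h _ => exact .pre h
  | choice _ hq ihp _ => exact .choiceL ihp hq

theorem tr_reachable {A : Type} {P P' : Proc A} {a : A}
    (h : Tr P a P') (hr : Reachable P) : Reachable P' := by
  induction h with
  | actf h => exact .exe (initial_reachable h)
  | actp _ ih => cases hr with | exe hr => exact .exe (ih hr)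
  | chol _ h2 ih => cases hr with
    | choiceL hr _ => exact .choiceL (ih hr) h2
    | choiceR h hr => exact .choiceL (ih (initial_reachable h)) h2
  | chor _ h1 ih => cases hr with
    | choiceL hr h => exact .choiceR h1 (ih (initial_reachable h))
    | choiceR _ hr => exact .choiceR h1 (ih hr)

theorem tr_unique' {A : Type} {R : Proc A}
    (hr : Reachable R) : ∀ {P Q : Proc A} {a b : A},
    Tr P a R → Tr Q b R → P = Q ∧ a = b := by
  induction R with intro P Q a b h1 h2
  | nil => cases h1
  | exe c S ih =>
    cases h1 with
    | actf hS =>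
      cases h2 with
      | actf _ => exact ⟨rfl, rfl⟩
      | actp h => exact absurd hS (tr_not_initial h)
    | actp h =>
      cases h2 with
      | actf hS => exact absurd hS (tr_not_initial h)
      | actp h' =>
        have hS : Reachable S := by cases hr with | exe hr => exact hr
        obtain ⟨he, ha⟩ := ih hS h h'
        cases he; cases ha; exact ⟨rfl, rfl⟩
  | pre _ _ _ => cases h1
  | choice R1 R2 ih1 ih2 =>
    cases h1 with
    | chol h hi =>
      cases h2 with
      | chol h' hi' =>
        have hR1 : Reachable R1 := by
          cases hr with
          | choiceL hr _ => exact hr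
          | choiceR h1i _ => exact absurd h1i (tr_not_initial h)
        obtain ⟨he, ha⟩ := ih1 hR1 h h'
        cases he; cases ha; exact ⟨rfl, rfl⟩
      | chor h' _ => exact absurd hi (tr_not_initial h')
    | chor h hi =>
      cases h2 with
      | chol h' _ => exact absurd hi (tr_not_initial h')
      | chor h' hi' =>
        have hR2 : Reachable R2 := by
          cases hr with
          | choiceL _ h2i => exact absurd h2i (tr_not_initial h)
          | choiceR _ hr => exact hr
        obtain ⟨he, ha⟩ := ih2 hR2 h h'
        cases he; cases ha; exact ⟨rfl, rfl⟩

theorem tr_unique {A : Type} {R P Q : Proc A} {a b : A}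
    (hr : Reachable R) (h1 : Tr P a R) (h2 : Tr Q b R) : P = Q ∧ a = b :=
  tr_unique' hr h1 h2

inductive BRel {A : Type} : Proc A → Proc A → Prop
  | base {P Q : Proc A} : Initial P → Initial Q → FB P Q → BRel P Q
  | step {P Q P' Q' : Proc A} {a : A} : BRel P Q → Tr P a P' → Tr Q a Q' →
      FB P' Q' → BRel P' Q'

theorem brel_symm {A : Type} {P Q : Proc A} (h : BRel P Q) : BRel Q P := by
  induction h with
  | base hp hq hfb =>
    obtain ⟨B, hB, hPQ⟩ := hfb
    exact .base hq hp ⟨B, hB, hB.1 _ _ hPQ⟩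
  | step _ htp htq hfb ih =>
    obtain ⟨B, hB, hPQ⟩ := hfb
    exact .step ih htq htp ⟨B, hB, hB.1 _ _ hPQ⟩

theorem brel_fb {A : Type} {P Q : Proc A} (h : BRel P Q) : FB P Q := by
  cases h with
  | base _ _ h => exact h
  | step _ _ _ h => exact h

theorem brel_reach {A : Type} {P Q : Proc A} (h : BRel P Q) :
    Reachable P ∧ Reachable Q := by
  induction h with
  | base hp hq _ => exact ⟨initial_reachable hp, initial_reachable hq⟩
  | step _ htp htq _ ih => exact ⟨tr_reachable htp ih.1, tr_reachable htq ih.2⟩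

theorem fb_tr {A : Type} {P Q P' : Proc A} {a : A} (h : FB P Q) (ht : Tr P a P') :
    ∃ Q', Tr Q a Q' ∧ FB P' Q' := by
  obtain ⟨B, hB, hPQ⟩ := h
  obtain ⟨Q', htq, hB'⟩ := hB.2 _ _ _ _ hPQ ht
  exact ⟨Q', htq, B, hB, hB'⟩

theorem frb_eq_fb_on_initial {A : Type} {P1 P2 : Proc A}
    (h1 : Initial P1) (h2 : Initial P2) : FRB P1 P2 ↔ FB P1 P2 := by
  constructor
  · rintro ⟨B, ⟨hs, hf, _⟩, hPQ⟩
    exact ⟨B, ⟨hs, hf⟩, hPQ⟩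
  · intro hfb
    refine ⟨BRel, ⟨fun _ _ => brel_symm, ?_, ?_⟩, .base h1 h2 hfb⟩
    · intro P Q a P' hB ht
      obtain ⟨Q', htq, hfb'⟩ := fb_tr (brel_fb hB) ht
      exact ⟨Q', htq, .step hB ht htq hfb'⟩
    · intro P Q a P' hB ht
      cases hB with
      | base hp _ _ => exact absurd hp (tr_not_initial ht)
      | step hB0 htp htq hfb' =>
        rename_i P0 Q0 b
        have hr := (brel_reach hB0).1
        obtain ⟨he, ha⟩ := tr_unique (tr_reachable htp hr) ht htp
        cases he; cases ha
        exact ⟨Q0, htq, hB0⟩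
end
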